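/- For all indices 1 ≤ i < j < k ≤ 2n with k − i < n and every point p ∈ ℝ², the wedge E_j(p) is contained in the union E_i(p) ∪ E_k(p). -/
import Mathlib


noncomputable section

/-- The planar cross product of two vectors in `ℝ × ℝ`. -/
def cross (a b : ℝ × ℝ) : ℝ := a.1 * b.2 - a.2 * b.1

/-- The vertices `v 1, …, v m` (indexed cyclically) are in strictly convex position,
listed in clockwise order: for every directed edge `v i → v (i+1)`, all other
vertices lie strictly on its right side. -/
def ClockwiseConvex {m : ℕ} (v : ZMod m → ℝ × ℝ) : Prop :=
  ∀ i j : ZMod m, j ≠ i → j ≠ i + 1 → cross (v (i + 1) - v i) (v j - v i) < 0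

/-- Central symmetry: there is a center `c` with `v (i + n) = 2 c - v i` for all `i`. -/
def CentSym (n : ℕ) (v : ZMod (2 * n) → ℝ × ℝ) : Prop :=
  ∃ c : ℝ × ℝ, ∀ i : ZMod (2 * n), v (i + (n : ZMod (2 * n))) = (2 : ℝ) • c - v i

/-- The translate `E_i(p)` of the closed wedge
`E_i = {s • (v (i-1) - v i) + t • (v (i+1) - v i) : s, t ≥ 0}` with apex at `p`. -/
def Wedge {m : ℕ} (v : ZMod m → ℝ × ℝ) (i : ZMod m) (p : ℝ × ℝ) : Set (ℝ × ℝ) :=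
  {x | ∃ s t : ℝ, 0 ≤ s ∧ 0 ≤ t ∧ x = p + s • (v (i - 1) - v i) + t • (v (i + 1) - v i)}

lemma crossSwap (a b : ℝ × ℝ) : cross a b = - cross b a := by simp [cross]; ring
lemma crossSelf (a : ℝ × ℝ) : cross a a = 0 := by simp [cross]; ring
lemma crossAddR (a x y : ℝ × ℝ) : cross a (x + y) = cross a x + cross a y := by
  simp [cross]; ring
lemma crossSubR (a x y : ℝ × ℝ) : cross a (x - y) = cross a x - cross a y := by
  simp [cross]; ring
lemma crossNegR (a x : ℝ × ℝ) : cross a (-x) = - cross a x := by simp [cross]; ring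
lemma crossSmulR (a : ℝ × ℝ) (r : ℝ) (x : ℝ × ℝ) : cross a (r • x) = r * cross a x := by
  simp [cross]; ring
lemma crossAddL (x y a : ℝ × ℝ) : cross (x + y) a = cross x a + cross y a := by
  simp [cross]; ring
lemma crossSmulL (r : ℝ) (x a : ℝ × ℝ) : cross (r • x) a = r * cross x a := by
  simp [cross]; ring
lemma crossNegL (x a : ℝ × ℝ) : cross (-x) a = - cross x a := by simp [cross]; ring
lemma plucker (a b y z : ℝ × ℝ) :
    cross a b * cross y z = cross a y * cross b z - cross a z * cross b y := by
  simp [cross]; ring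
lemma grassmann (a b c : ℝ × ℝ) : cross a c • b = cross b c • a + cross a b • c := by
  rw [Prod.ext_iff]; constructor <;> simp [cross, smul_eq_mul] <;> ring

/-- the edge vector from `v a` to `v (a+1)` -/
def edgeVec {m : ℕ} (v : ZMod m → ℝ × ℝ) (a : ZMod m) : ℝ × ℝ := v (a + 1) - v a

section Geom

variable {n : ℕ} (hn : 2 ≤ n) {v : ZMod (2 * n) → ℝ × ℝ}
  (hcw : ClockwiseConvex v) (hsym : CentSym n v)

lemma cast_ne_cast {d e : ℕ} (hd : d < 2 * n) (he : e < 2 * n) (hne : d ≠ e) :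
    (d : ZMod (2 * n)) ≠ (e : ZMod (2 * n)) := by
  intro h
  rw [ZMod.natCast_eq_natCast_iff] at h
  have h2 : d % (2 * n) = e % (2 * n) := h
  rw [Nat.mod_eq_of_lt hd, Nat.mod_eq_of_lt he] at h2
  exact hne h2

lemma add_cast_ne {a : ZMod (2 * n)} {d e : ℕ} (hd : d < 2 * n) (he : e < 2 * n)
    (hne : d ≠ e) : a + (d : ZMod (2 * n)) ≠ a + (e : ZMod (2 * n)) := by
  intro h
  exact cast_ne_cast hd he hne (by exact add_left_cancel h)

lemma add_cast_ne0 {a : ZMod (2 * n)} {d : ℕ} (hd : d < 2 * n) (hd0 : d ≠ 0) :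
    a + (d : ZMod (2 * n)) ≠ a := by
  have := add_cast_ne (a := a) (e := 0) hd (by omega) hd0
  simpa using this

include hn hcw in
/-- vertices strictly to the right of every edge, gap form -/
lemma vert_right (a : ZMod (2 * n)) {d : ℕ} (h2 : 2 ≤ d) (hd : d < 2 * n) :
    cross (edgeVec v a) (v (a + (d : ZMod (2 * n))) - v a) < 0 := by
  refine hcw a _ ?_ ?_
  · exact add_cast_ne0 hd (by omega)
  · have := add_cast_ne (a := a) (d := d) (e := 1) hd (by omega) (by omega)
    simpa using this

include hsym in
lemma edge_antipode (a : ZMod (2 * n)) :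
    edgeVec v (a + (n : ZMod (2 * n))) = - edgeVec v a := by
  obtain ⟨c, hc⟩ := hsym
  have h1 : (a + (n : ZMod (2 * n))) + 1 = (a + 1) + (n : ZMod (2 * n)) := by ring
  simp only [edgeVec, h1, hc (a + 1), hc a]
  abel

include hn hcw hsym in
lemma strip_lower (a : ZMod (2 * n)) {d : ℕ} (h1 : 1 ≤ d) (h2 : d ≤ n - 1) :
    0 < cross (edgeVec v a) (v (a + (d : ZMod (2 * n))) - v (a + (n : ZMod (2 * n)))) := by
  have key := hcw (a + (n : ZMod (2 * n))) (a + (d : ZMod (2 * n))) ?_ ?_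
  · have hE : v (a + (n : ZMod (2 * n)) + 1) - v (a + (n : ZMod (2 * n)))
        = - edgeVec v a := edge_antipode hsym a
    rw [hE, crossNegL] at key
    linarith
  · exact add_cast_ne (by omega) (by omega) (by omega)
  · have hcast : a + (n : ZMod (2 * n)) + 1 = a + ((n + 1 : ℕ) : ZMod (2 * n)) := by
      push_cast; ring
    rw [hcast]
    exact add_cast_ne (by omega) (by omega) (by omega)

include hn hcw hsym in
lemma diag_side (a : ZMod (2 * n)) : ∀ d : ℕ, 1 ≤ d → d ≤ n - 1 →
    0 < cross (v (a + (n : ZMod (2 * n))) - v a) (v (a + (d : ZMod (2 * n))) - v a) := by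
  intro d
  induction d with
  | zero => omega
  | succ d ih =>
    intro _ hdn
    rcases Nat.eq_zero_or_pos d with hd0 | hd1
    · -- base case d+1 = 1
      subst hd0
      have key := vert_right hn hcw a (d := n) (by omega) (by omega)
      rw [crossSwap]
      push_cast
      simp only [edgeVec] at key
      linarith
    · -- inductive step
      by_contra hcon
      push_neg at hcon
      have hu : 0 < cross (v (a + (n : ZMod (2 * n))) - v a) (v (a + (d : ZMod (2 * n))) - v a) :=
        ih hd1 (by omega)
      set w := v (a + (n : ZMod (2 * n))) - v a with hw
      set y1 := v (a + (d : ZMod (2 * n))) - v a with hy1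
      set y2 := v (a + ((d + 1 : ℕ) : ZMod (2 * n))) - v a with hy2
      set u := cross w y1 with hudef
      set u' := cross w y2 with hu'def
      have hu' : u' ≤ 0 := hcon
      have hden : 0 < u - u' := by linarith
      set τ := u / (u - u') with hτ
      have hτ0 : 0 < τ := div_pos hu hden
      have hτ1 : τ ≤ 1 := by
        rw [hτ, div_le_one hden]; linarith
      set y := (1 - τ) • y1 + τ • y2 with hy
      have hwy : cross w y = 0 := by
        rw [hy, crossAddR, crossSmulR, crossSmulR, ← hudef, ← hu'def, hτ]
        field_simp
        ring
      -- heights relative to edge a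
      have h1 : cross (edgeVec v a) y1 ≤ 0 := by
        rcases Nat.lt_or_ge d 2 with hd2 | hd2
        · have hd1' : d = 1 := by omega
          subst hd1'
          have : y1 = edgeVec v a := by
            rw [hy1, edgeVec]; push_cast; ring_nf
          rw [this, crossSelf]
        · exact le_of_lt (vert_right hn hcw a hd2 (by omega))
      have h2 : cross (edgeVec v a) y2 < 0 := vert_right hn hcw a (by omega) (by omega)
      have hH : cross (edgeVec v a) w < 0 := vert_right hn hcw a (d := n) (by omega) (by omega)
      have hs1 : 0 < cross (edgeVec v a) (y1 - w) := by
        have := strip_lower hn hcw hsym a (d := d) hd1 (by omega)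
        have hyy : y1 - w = v (a + (d : ZMod (2 * n))) - v (a + (n : ZMod (2 * n))) := by
          rw [hy1, hw]; abel
        rwa [hyy]
      have hs2 : 0 < cross (edgeVec v a) (y2 - w) := by
        have := strip_lower hn hcw hsym a (d := d + 1) (by omega) (by omega)
        have hyy : y2 - w = v (a + ((d + 1 : ℕ) : ZMod (2 * n))) - v (a + (n : ZMod (2 * n))) := by
          rw [hy2, hw]; abel
        rwa [hyy]
      rw [crossSubR] at hs1 hs2
      set hx := cross (edgeVec v a) y with hhx
      have hxneg : hx < 0 := by
        rw [hhx, hy, crossAddR, crossSmulR, crossSmulR]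
        nlinarith
      have hxH : cross (edgeVec v a) w < hx := by
        rw [hhx, hy, crossAddR, crossSmulR, crossSmulR]
        nlinarith
      -- Grassmann: H • y = hx • w
      have hgr : cross (edgeVec v a) w • y = hx • w := by
        have h := grassmann (edgeVec v a) y w
        rw [crossSwap y w, hwy] at h
        simpa using h
      -- convexity at edge b = a + d
      set b := a + (d : ZMod (2 * n)) with hb
      have hQ1 : cross (edgeVec v b) (v a - v b) < 0 := by
        refine hcw b a ?_ ?_
        · intro h; exact add_cast_ne0 (a := a) (d := d) (by omega) (by omega) h.symm
        · have hcast : b + 1 = a + ((d + 1 : ℕ) : ZMod (2 * n)) := by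
            rw [hb]; push_cast; ring
          rw [hcast]
          intro h; exact add_cast_ne0 (a := a) (d := d + 1) (by omega) (by omega) h.symm
      have hQ2 : cross (edgeVec v b) (v (a + (n : ZMod (2 * n))) - v b) < 0 := by
        refine hcw b _ ?_ ?_
        · exact add_cast_ne (by omega) (by omega) (by omega)
        · have hcast : b + 1 = a + ((d + 1 : ℕ) : ZMod (2 * n)) := by
            rw [hb]; push_cast; ring
          rw [hcast]
          exact add_cast_ne (by omega) (by omega) (by omega)
      -- cross (edgeVec v b) y = - Q1
      have hby1 : cross (edgeVec v b) y1 = - cross (edgeVec v b) (v a - v b) := by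
        have : y1 = -(v a - v b) := by rw [hy1, hb]; abel
        rw [this, crossNegR]
      have hby2 : cross (edgeVec v b) y2 = - cross (edgeVec v b) (v a - v b) := by
        have hsplit : y2 = edgeVec v b + (-(v a - v b)) := by
          rw [hy2, hb, edgeVec]
          have hcast : a + (d : ZMod (2 * n)) + 1 = a + ((d + 1 : ℕ) : ZMod (2 * n)) := by
            push_cast; ring
          rw [hcast]; abel
        rw [hsplit, crossAddR, crossSelf, crossNegR]; ring
      have hby : cross (edgeVec v b) y = - cross (edgeVec v b) (v a - v b) := by
        rw [hy, crossAddR, crossSmulR, crossSmulR, hby1, hby2]; ring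
      have hbw : cross (edgeVec v b) w
          = cross (edgeVec v b) (v (a + (n : ZMod (2 * n))) - v b)
            - cross (edgeVec v b) (v a - v b) := by
        have hweq : w = (v (a + (n : ZMod (2 * n))) - v b) - (v a - v b) := by
          rw [hw, hb]; abel
        rw [hweq, crossSubR]
      -- combine
      have hkey := congrArg (fun z => cross (edgeVec v b) z) hgr
      simp only [crossSmulR] at hkey
      rw [hby, hbw] at hkey
      set Q1 := cross (edgeVec v b) (v a - v b) with hq1
      set Q2 := cross (edgeVec v b) (v (a + (n : ZMod (2 * n))) - v b) with hq2
      set H := cross (edgeVec v a) w with hHdef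
      -- hkey : H * (-Q1) = hx * (Q2 - (-Q1))
      nlinarith [mul_pos (neg_pos.mpr hxneg) (neg_pos.mpr hQ2),
        mul_pos (sub_pos.mpr hxH) (neg_pos.mpr hQ1)]
include hn hcw in
lemma edge_consec (a : ZMod (2 * n)) :
    cross (edgeVec v a) (edgeVec v (a + 1)) < 0 := by
  have key := vert_right hn hcw a (d := 2) (by omega) (by omega)
  have hsplit : edgeVec v (a + 1)
      = (v (a + ((2 : ℕ) : ZMod (2 * n))) - v a) - edgeVec v a := by
    simp only [edgeVec]
    have : a + ((2 : ℕ) : ZMod (2 * n)) = a + 1 + 1 := by push_cast; ring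
    rw [this]; abel
  rw [hsplit, crossSubR, crossSelf]
  linarith

include hn hcw hsym in
lemma edge_cross_neg (a : ZMod (2 * n)) {d : ℕ} (h1 : 1 ≤ d) (h2 : d ≤ n - 1) :
    cross (edgeVec v a) (edgeVec v (a + (d : ZMod (2 * n)))) < 0 := by
  rcases eq_or_lt_of_le h1 with hd1 | hd1'
  · -- d = 1
    have : a + (d : ZMod (2 * n)) = a + 1 := by rw [← hd1]; push_cast; ring
    rw [this]; exact edge_consec hn hcw a
  rcases eq_or_lt_of_le h2 with hdn | hdn'
  · -- d = n - 1
    set a' := a + ((2 * n - 1 : ℕ) : ZMod (2 * n)) with ha'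
    have hant : edgeVec v (a + (d : ZMod (2 * n)) + (n : ZMod (2 * n)))
        = - edgeVec v (a + (d : ZMod (2 * n))) := edge_antipode hsym _
    have hidx : a + (d : ZMod (2 * n)) + (n : ZMod (2 * n)) = a' := by
      rw [ha', add_assoc, ← Nat.cast_add]
      congr 1
      rw [ZMod.natCast_eq_natCast_iff]
      have : d + n = 2 * n - 1 := by omega
      rw [this]
    have hidx2 : a' + 1 = a := by
      rw [ha', add_assoc]
      have : ((2 * n - 1 : ℕ) : ZMod (2 * n)) + 1 = ((2 * n : ℕ) : ZMod (2 * n)) := by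
        push_cast [Nat.cast_sub (by omega : 1 ≤ 2 * n)]; ring
      rw [this, ZMod.natCast_self, add_zero]
    have key := edge_consec hn hcw a'
    rw [hidx2] at key
    have : edgeVec v (a + (d : ZMod (2 * n))) = - edgeVec v a' := by
      rw [← hidx, hant]; simp [hidx]
    rw [this, crossNegR, crossSwap]
    linarith
  -- middle case : 2 ≤ d ≤ n - 2
  set b := a + (d : ZMod (2 * n)) with hb
  set w := v (a + (n : ZMod (2 * n))) - v a with hw
  set y := v b - v a with hy
  set z := v b - v (a + (n : ZMod (2 * n))) with hz
  have hG : 0 < cross w y := diag_side hn hcw hsym a d h1 h2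
  have hyz : cross y z = cross w y := by
    have : z = y - w := by rw [hz, hy, hw]; abel
    rw [this, crossSubR, crossSelf, crossSwap]
    ring
  have hAy : cross (edgeVec v a) y < 0 := vert_right hn hcw a (by omega) (by omega)
  have hAz : 0 < cross (edgeVec v a) z := strip_lower hn hcw hsym a h1 h2
  have hBz : 0 < cross (edgeVec v b) z := by
    have key : cross (edgeVec v b) (v (a + (n : ZMod (2 * n))) - v b) < 0 := by
      refine hcw b _ ?_ ?_
      · exact add_cast_ne (by omega) (by omega) (by omega)
      · have hcast : b + 1 = a + ((d + 1 : ℕ) : ZMod (2 * n)) := by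
          rw [hb]; push_cast; ring
        rw [hcast]
        exact add_cast_ne (by omega) (by omega) (by omega)
    have : z = -(v (a + (n : ZMod (2 * n))) - v b) := by rw [hz]; abel
    rw [this, crossNegR]
    linarith
  have hBy : 0 < cross (edgeVec v b) y := by
    have key : cross (edgeVec v b) (v a - v b) < 0 := by
      refine hcw b a ?_ ?_
      · intro h; exact add_cast_ne0 (a := a) (d := d) (by omega) (by omega) h.symm
      · have hcast : b + 1 = a + ((d + 1 : ℕ) : ZMod (2 * n)) := by
          rw [hb]; push_cast; ring
        rw [hcast]
        intro h; exact add_cast_ne0 (a := a) (d := d + 1) (by omega) (by omega) h.symm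
    have : y = -(v a - v b) := by rw [hy]; abel
    rw [this, crossNegR]
    linarith
  have hpl := plucker (edgeVec v a) (edgeVec v b) y z
  rw [hyz] at hpl
  nlinarith

include hn hcw hsym in
lemma edge_cross_nonpos (a : ZMod (2 * n)) {d : ℕ} (h1 : 1 ≤ d) (h2 : d ≤ n) :
    cross (edgeVec v a) (edgeVec v (a + (d : ZMod (2 * n)))) ≤ 0 := by
  rcases eq_or_lt_of_le h2 with hdn | hdn'
  · subst hdn
    rw [edge_antipode hsym a, crossNegR, crossSelf]
    simp
  · exact le_of_lt (edge_cross_neg hn hcw hsym a h1 (by omega))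
end Geom

lemma mem_wedge_of {n : ℕ} {v : ZMod (2 * n) → ℝ × ℝ} (a : ZMod (2 * n)) (p x : ℝ × ℝ)
    (hC : cross (edgeVec v (a - 1)) (edgeVec v a) < 0)
    (h1 : cross (edgeVec v (a - 1)) (x - p) ≤ 0)
    (h2 : cross (edgeVec v a) (x - p) ≤ 0) :
    x ∈ Wedge v a p := by
  set A := v (a - 1) - v a with hA
  set B := v (a + 1) - v a with hB
  have hAe : A = - edgeVec v (a - 1) := by
    rw [hA]; simp only [edgeVec, sub_add_cancel]; abel
  have hBe : B = edgeVec v a := rfl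
  have hCpos : 0 < cross A B := by rw [hAe, hBe, crossNegL]; linarith
  have hC0 : cross A B ≠ 0 := ne_of_gt hCpos
  refine ⟨cross (x - p) B / cross A B, cross A (x - p) / cross A B, ?_, ?_, ?_⟩
  · apply div_nonneg ?_ (le_of_lt hCpos)
    rw [hBe, crossSwap]; linarith
  · apply div_nonneg ?_ (le_of_lt hCpos)
    rw [hAe, crossNegL]; linarith
  · have hg := grassmann A (x - p) B
    have hxp := congrArg (fun z => (cross A B)⁻¹ • z) hg
    simp only [smul_smul, inv_mul_cancel₀ hC0, one_smul, smul_add] at hxp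
    rw [div_eq_inv_mul, div_eq_inv_mul, add_assoc, ← hxp]
    abel

/-- For indices `1 ≤ i < j < k ≤ 2n` with `k - i < n`, the wedge
`E_j(p)` is contained in `E_i(p) ∪ E_k(p)`. -/
theorem wedge_between_subset_union
    (n : ℕ) (hn : 2 ≤ n) (v : ZMod (2 * n) → ℝ × ℝ)
    (hcw : ClockwiseConvex v) (hsym : CentSym n v)
    (i j k : ℕ) (hi : 1 ≤ i) (hij : i < j) (hjk : j < k) (hk : k ≤ 2 * n)
    (hki : k - i < n) (p : ℝ × ℝ) :
    Wedge v (j : ZMod (2 * n)) p ⊆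
      Wedge v (i : ZMod (2 * n)) p ∪ Wedge v (k : ZMod (2 * n)) p := by
  intro x hx
  obtain ⟨s, t, hs, ht, hxe⟩ := hx
  have hgap : ∀ l m : ℕ, l + 1 ≤ m → m ≤ l + (n - 1) →
      cross (edgeVec v (l : ZMod (2 * n))) (edgeVec v (m : ZMod (2 * n))) < 0 := by
    intro l m hl hm
    have hcast : ((m : ℕ) : ZMod (2 * n)) = (l : ZMod (2 * n)) + ((m - l : ℕ) : ZMod (2 * n)) := by
      rw [← Nat.cast_add]; congr 1; omega
    rw [hcast]
    exact edge_cross_neg hn hcw hsym _ (by omega) (by omega)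
  have hgap' : ∀ l m : ℕ, l + 1 ≤ m → m ≤ l + n →
      cross (edgeVec v (l : ZMod (2 * n))) (edgeVec v (m : ZMod (2 * n))) ≤ 0 := by
    intro l m hl hm
    have hcast : ((m : ℕ) : ZMod (2 * n)) = (l : ZMod (2 * n)) + ((m - l : ℕ) : ZMod (2 * n)) := by
      rw [← Nat.cast_add]; congr 1; omega
    rw [hcast]
    exact edge_cross_nonpos hn hcw hsym _ (by omega) (by omega)
  -- decompose x - p in the wedge at j
  have hJm : ((j : ZMod (2 * n)) - 1) = ((j - 1 : ℕ) : ZMod (2 * n)) := by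
    push_cast [Nat.cast_sub (by omega : 1 ≤ j)]; ring
  have hJm1 : ((j - 1 : ℕ) : ZMod (2 * n)) + 1 = (j : ZMod (2 * n)) := by
    push_cast [Nat.cast_sub (by omega : 1 ≤ j)]; ring
  have hEJm : v ((j : ZMod (2 * n)) - 1) - v (j : ZMod (2 * n))
      = - edgeVec v ((j - 1 : ℕ) : ZMod (2 * n)) := by
    rw [hJm]; simp only [edgeVec, hJm1]; abel
  have hxp : x - p = s • (- edgeVec v ((j - 1 : ℕ) : ZMod (2 * n)))
      + t • edgeVec v (j : ZMod (2 * n)) := by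
    rw [hxe, hEJm]; simp only [edgeVec]; abel
  have hcjj : cross (edgeVec v ((j - 1 : ℕ) : ZMod (2 * n))) (edgeVec v (j : ZMod (2 * n))) < 0 := by
    have := hgap (j - 1) j (by omega) (by omega)
    simpa using this
  have hgJ1 : cross (edgeVec v ((j - 1 : ℕ) : ZMod (2 * n))) (x - p) ≤ 0 := by
    rw [hxp, crossAddR, crossSmulR, crossSmulR, crossNegR, crossSelf]
    nlinarith
  have hgJ : cross (edgeVec v (j : ZMod (2 * n))) (x - p) ≤ 0 := by
    rw [hxp, crossAddR, crossSmulR, crossSmulR, crossNegR, crossSelf]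
    have : cross (edgeVec v (j : ZMod (2 * n))) (edgeVec v ((j - 1 : ℕ) : ZMod (2 * n)))
        = - cross (edgeVec v ((j - 1 : ℕ) : ZMod (2 * n))) (edgeVec v (j : ZMod (2 * n))) := by
      rw [crossSwap]
    nlinarith
  have hGr : ∀ A B C : ℝ × ℝ, cross A C * cross B (x - p)
      = cross B C * cross A (x - p) + cross A B * cross C (x - p) := by
    intro A B C
    have h := congrArg (fun z => cross z (x - p)) (grassmann A B C)
    simpa [crossAddL, crossSmulL] using h
  rcases le_or_gt (cross (edgeVec v ((i - 1 : ℕ) : ZMod (2 * n))) (x - p)) 0 with hI1 | hI1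
  · -- x lies in the wedge at i
    left
    have hD : cross (edgeVec v ((i - 1 : ℕ) : ZMod (2 * n))) (edgeVec v (j : ZMod (2 * n))) < 0 :=
      hgap (i - 1) j (by omega) (by omega)
    have h1 : cross (edgeVec v (i : ZMod (2 * n))) (edgeVec v (j : ZMod (2 * n))) < 0 :=
      hgap i j (by omega) (by omega)
    have h2 : cross (edgeVec v ((i - 1 : ℕ) : ZMod (2 * n))) (edgeVec v (i : ZMod (2 * n))) < 0 :=
      hgap (i - 1) i (by omega) (by omega)
    have key := hGr (edgeVec v ((i - 1 : ℕ) : ZMod (2 * n))) (edgeVec v (i : ZMod (2 * n)))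
      (edgeVec v (j : ZMod (2 * n)))
    have hgI : cross (edgeVec v (i : ZMod (2 * n))) (x - p) ≤ 0 := by
      nlinarith [mul_nonneg (neg_nonneg.2 h1.le) (neg_nonneg.2 hI1),
        mul_nonneg (neg_nonneg.2 h2.le) (neg_nonneg.2 hgJ)]
    have hIm : ((i : ZMod (2 * n)) - 1) = ((i - 1 : ℕ) : ZMod (2 * n)) := by
      push_cast [Nat.cast_sub (by omega : 1 ≤ i)]; ring
    refine mem_wedge_of _ _ _ ?_ ?_ ?_
    · rw [hIm]; exact h2
    · rw [hIm]; exact hI1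
    · exact hgI
  · -- x lies in the wedge at k
    right
    have hD : cross (edgeVec v ((i - 1 : ℕ) : ZMod (2 * n))) (edgeVec v (j : ZMod (2 * n))) < 0 :=
      hgap (i - 1) j (by omega) (by omega)
    have hkj : cross (edgeVec v (j : ZMod (2 * n))) (edgeVec v (k : ZMod (2 * n))) < 0 :=
      hgap j k (by omega) (by omega)
    have hik : cross (edgeVec v ((i - 1 : ℕ) : ZMod (2 * n))) (edgeVec v (k : ZMod (2 * n))) ≤ 0 :=
      hgap' (i - 1) k (by omega) (by omega)
    have keyK := hGr (edgeVec v ((i - 1 : ℕ) : ZMod (2 * n))) (edgeVec v (k : ZMod (2 * n)))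
      (edgeVec v (j : ZMod (2 * n)))
    have hgK : cross (edgeVec v (k : ZMod (2 * n))) (x - p) ≤ 0 := by
      have hswap : cross (edgeVec v (k : ZMod (2 * n))) (edgeVec v (j : ZMod (2 * n)))
          = - cross (edgeVec v (j : ZMod (2 * n))) (edgeVec v (k : ZMod (2 * n))) := by
        rw [crossSwap]
      nlinarith [mul_pos (neg_pos.2 hkj) hI1, mul_nonneg (neg_nonneg.2 hik) (neg_nonneg.2 hgJ)]
    have hgK1 : cross (edgeVec v ((k - 1 : ℕ) : ZMod (2 * n))) (x - p) ≤ 0 := by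
      rcases eq_or_lt_of_le (by omega : j ≤ k - 1) with hjk1 | hjk1
      · rw [← hjk1]; exact hgJ
      · have hk1j : cross (edgeVec v (j : ZMod (2 * n)))
            (edgeVec v ((k - 1 : ℕ) : ZMod (2 * n))) < 0 :=
          hgap j (k - 1) (by omega) (by omega)
        have hik1 : cross (edgeVec v ((i - 1 : ℕ) : ZMod (2 * n)))
            (edgeVec v ((k - 1 : ℕ) : ZMod (2 * n))) < 0 :=
          hgap (i - 1) (k - 1) (by omega) (by omega)
        have keyK1 := hGr (edgeVec v ((i - 1 : ℕ) : ZMod (2 * n)))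
          (edgeVec v ((k - 1 : ℕ) : ZMod (2 * n))) (edgeVec v (j : ZMod (2 * n)))
        have hswap : cross (edgeVec v ((k - 1 : ℕ) : ZMod (2 * n))) (edgeVec v (j : ZMod (2 * n)))
            = - cross (edgeVec v (j : ZMod (2 * n))) (edgeVec v ((k - 1 : ℕ) : ZMod (2 * n))) := by
          rw [crossSwap]
        nlinarith [mul_pos (neg_pos.2 hk1j) hI1,
          mul_nonneg (neg_nonneg.2 hik1.le) (neg_nonneg.2 hgJ)]
    have hKm : ((k : ZMod (2 * n)) - 1) = ((k - 1 : ℕ) : ZMod (2 * n)) := by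
      push_cast [Nat.cast_sub (by omega : 1 ≤ k)]; ring
    have hCk : cross (edgeVec v ((k - 1 : ℕ) : ZMod (2 * n))) (edgeVec v (k : ZMod (2 * n))) < 0 := by
      have := hgap (k - 1) k (by omega) (by omega)
      simpa using this
    refine mem_wedge_of _ _ _ ?_ ?_ ?_
    · rw [hKm]; exact hCk
    · rw [hKm]; exact hgK1
    · exact hgK
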